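/- arXiv:2003.03693 — 6 statements merged into one kernel-verified Lean document; each statement's English description precedes it below -/
import Mathlib

section
/- Under Assumption 1 (B ≥ 0, C ≤ 0 entrywise, and I⊗D + (Aᵀ⊗I)Π a nonsingular M-matrix), the fixed-point iterates X_0 = 0, S_T(X_{k+1}) = X_kᵀ B X_k − C satisfy X_{k+1} ≥ X_k entrywise for all k ≥ 0; in particular every X_k is nonnegative. -/
open Matrix

/-- A real square matrix is a Z-matrix if all its off-diagonal entries are nonpositive. -/
def IsZMatrix {m : Type*} [Fintype m] [DecidableEq m] (A : Matrix m m ℝ) : Prop :=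
  ∀ i j, i ≠ j → A i j ≤ 0

/-- A real square matrix is a nonsingular M-matrix if it can be written as `s • 1 - N`
with `N` entrywise nonnegative and `s` strictly larger than the spectral radius of `N`
(i.e., every complex eigenvalue of `N` has modulus strictly less than `s`). -/
def IsNonsingMMatrix {m : Type*} [Fintype m] [DecidableEq m] (A : Matrix m m ℝ) : Prop :=
  ∃ (s : ℝ) (N : Matrix m m ℝ),
    0 < s ∧ (∀ i j, 0 ≤ N i j) ∧ A = s • (1 : Matrix m m ℝ) - N ∧
    ∀ μ ∈ spectrum ℂ (N.map (algebraMap ℝ ℂ)), ‖μ‖ < s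

open Kronecker

/-- The vec-permutation matrix `Π = Σ_{i,j} E_{i,j} ⊗ E_{j,i}`, where `E_{i,j}` is the
matrix with `(i,j)` entry `1` and zeros elsewhere. -/
def vecPerm (n : ℕ) : Matrix (Fin n × Fin n) (Fin n × Fin n) ℝ :=
  ∑ i : Fin n, ∑ j : Fin n,
    (Matrix.single i j (1 : ℝ)) ⊗ₖ (Matrix.single j i (1 : ℝ))

/-- Column-stacking vectorization: `vecM X (j, i) = X i j`. -/
def vecM {n : ℕ} (X : Matrix (Fin n) (Fin n) ℝ) : Fin n × Fin n → ℝ := fun p => X p.2 p.1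

/-!
A nonsingular M-matrix `s • 1 - N` has the entrywise nonnegative inverse
`s⁻¹ • ∑ₖ (s⁻¹ • N) ^ k`: by Gelfand's formula `‖N ^ k‖` grows more slowly than `s ^ k`, so the
Neumann series converges. Through column-stacking, `S_T(X) = D X + Xᵀ A` is represented by that
M-matrix, so `S_T(X) ≤ S_T(Y)` forces `X ≤ Y`. As `X ↦ Xᵀ B X - C` is monotone on nonnegative
matrices, `X_k ≤ X_{k+1}` passes from `k` to `k + 1`, starting from `X_0 = 0 ≤ S_T⁻¹(-C) = X_1`.
-/

open Filter

section NeumannSeries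

variable {A : Type*} [NormedRing A] [NormedAlgebra ℂ A] [CompleteSpace A]

theorem spectralRadius_lt_ofReal_of_forall_norm_lt {a : A} {r : ℝ} (hr : 0 < r)
    (h : ∀ z ∈ spectrum ℂ a, ‖z‖ < r) : spectralRadius ℂ a < ENNReal.ofReal r := by
  rcases (spectrum ℂ a).eq_empty_or_nonempty with he | hne
  · simpa [spectralRadius, he] using hr
  · refine spectrum.spectralRadius_lt_of_forall_lt_of_nonempty hne fun z hz => ?_
    rw [← NNReal.coe_lt_coe, coe_nnnorm, Real.coe_toNNReal _ hr.le]
    exact h z hz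

theorem summable_norm_pow_div_of_spectralRadius_lt {a : A} {r : ℝ}
    (h : spectralRadius ℂ a < ENNReal.ofReal r) : Summable fun n => ‖a ^ n‖ / r ^ n := by
  obtain ⟨t, ht0, hat, htr⟩ := ENNReal.lt_iff_exists_real_btwn.1 h
  obtain ⟨htr, hr⟩ := ENNReal.ofReal_lt_ofReal_iff'.1 htr
  have hpow : ∀ᶠ n : ℕ in atTop, ‖a ^ n‖ ≤ t ^ n := by
    have hgelfand := spectrum.pow_norm_pow_one_div_tendsto_nhds_spectralRadius a
    filter_upwards [hgelfand.eventually_lt_const hat, eventually_ge_atTop 1] with n hn hn1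
    obtain ⟨hn, ht⟩ := ENNReal.ofReal_lt_ofReal_iff'.1 hn
    rw [one_div, Real.rpow_inv_lt_iff_of_pos (norm_nonneg _) ht0 (by exact_mod_cast hn1),
      Real.rpow_natCast] at hn
    exact hn.le
  refine (summable_geometric_of_lt_one (div_nonneg ht0 hr.le)
    ((div_lt_one hr).2 htr)).of_norm_bounded_eventually_nat ?_
  filter_upwards [hpow] with n hn
  rw [Real.norm_of_nonneg (by positivity), div_pow]
  exact div_le_div_of_nonneg_right hn (pow_nonneg hr.le n)

end NeumannSeries

namespace Matrix

attribute [local instance] Matrix.linftyOpSeminormedAddCommGroup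

theorem linfty_opNorm_map_eq {m n α β : Type*} [Fintype m] [Fintype n]
    [SeminormedAddCommGroup α] [SeminormedAddCommGroup β]
    (A : Matrix m n α) (f : α → β) (hf : ∀ a, ‖f a‖ = ‖a‖) : ‖A.map f‖ = ‖A‖ := by
  have hf' : ∀ a, ‖f a‖₊ = ‖a‖₊ := fun a => NNReal.eq (hf a)
  simp [linfty_opNorm_def, hf']

end Matrix

namespace IsNonsingMMatrix

variable {m : Type*} [Fintype m] [DecidableEq m] {M : Matrix m m ℝ}

attribute [local instance] Matrix.linftyOpNormedRing Matrix.linftyOpNormedAlgebra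

theorem exists_nonneg_mul_eq_one (hM : IsNonsingMMatrix M) :
    ∃ T : Matrix m m ℝ, (∀ i j, 0 ≤ T i j) ∧ T * M = 1 := by
  obtain ⟨s, N, hs, hN, rfl, hspec⟩ := hM
  set P : Matrix m m ℝ := s⁻¹ • N with hP
  have hP_nonneg : ∀ i j, 0 ≤ P i j := fun i j => mul_nonneg (inv_nonneg.2 hs.le) (hN i j)
  have hnorm : ∀ k, ‖P ^ k‖ = ‖N.map (algebraMap ℝ ℂ) ^ k‖ / s ^ k := fun k => by
    rw [hP, smul_pow, norm_smul, ← Matrix.map_pow,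
      linfty_opNorm_map_eq (N ^ k) (algebraMap ℝ ℂ) Complex.norm_real, norm_pow,
      Real.norm_of_nonneg (inv_nonneg.2 hs.le), inv_pow, inv_mul_eq_div]
  have hsum : Summable (P ^ ·) := Summable.of_norm <| by
    simpa only [hnorm] using summable_norm_pow_div_of_spectralRadius_lt
      (spectralRadius_lt_ofReal_of_forall_norm_lt hs hspec)
  refine ⟨s⁻¹ • ∑' k, P ^ k, fun i j => ?_, ?_⟩
  · have hsum_entries : Summable fun k => (P ^ k : m → m → ℝ) := hsum
    have hentry : (∑' k, P ^ k) i j = ∑' k, (P ^ k) i j :=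
      (congrFun (tsum_apply hsum_entries) j).trans (tsum_apply (Pi.summable.1 hsum_entries i))
    rw [Matrix.smul_apply, smul_eq_mul, hentry]
    exact mul_nonneg (inv_nonneg.2 hs.le) (tsum_nonneg fun k => pow_apply_nonneg hP_nonneg k i j)
  · have hM : s • (1 : Matrix m m ℝ) - N = s • (1 - P) := by
      rw [hP, smul_sub, smul_smul, mul_inv_cancel₀ hs.ne', one_smul]
    rw [hM, smul_mul_smul_comm, inv_mul_cancel₀ hs.ne', one_smul, hsum.tsum_pow_mul_one_sub]

theorem nonneg_of_mulVec_nonneg (hM : IsNonsingMMatrix M) {x : m → ℝ} (hx : 0 ≤ M *ᵥ x) :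
    0 ≤ x := by
  obtain ⟨T, hT, hTM⟩ := hM.exists_nonneg_mul_eq_one
  rw [← one_mulVec x, ← hTM, ← mulVec_mulVec]
  exact fun i => Finset.sum_nonneg fun j _ => mul_nonneg (hT i j) (hx j)

end IsNonsingMMatrix

section Vectorization

variable {n : ℕ}

lemma vecPerm_mulVec_vecM (X : Matrix (Fin n) (Fin n) ℝ) :
    vecPerm n *ᵥ vecM X = vecM Xᵀ := by
  ext ⟨a, b⟩
  simp [vecPerm, mulVec, dotProduct, vecM, Matrix.sum_apply, Matrix.single, Fintype.sum_prod_type,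
    ite_and]

lemma one_kronecker_mulVec_vecM (D X : Matrix (Fin n) (Fin n) ℝ) :
    ((1 : Matrix (Fin n) (Fin n) ℝ) ⊗ₖ D) *ᵥ vecM X = vecM (D * X) := by
  ext ⟨a, b⟩
  simp [mulVec, dotProduct, vecM, one_apply, Fintype.sum_prod_type, mul_apply, mul_comm]

lemma kronecker_one_mulVec_vecM (A Y : Matrix (Fin n) (Fin n) ℝ) :
    (A ⊗ₖ (1 : Matrix (Fin n) (Fin n) ℝ)) *ᵥ vecM Y = vecM (Y * Aᵀ) := by
  ext ⟨a, b⟩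
  simp [mulVec, dotProduct, vecM, one_apply, Fintype.sum_prod_type, mul_apply, mul_comm]

def tSylvesterMatrix (A D : Matrix (Fin n) (Fin n) ℝ) :
    Matrix (Fin n × Fin n) (Fin n × Fin n) ℝ :=
  (1 : Matrix (Fin n) (Fin n) ℝ) ⊗ₖ D + (Aᵀ ⊗ₖ (1 : Matrix (Fin n) (Fin n) ℝ)) * vecPerm n

lemma tSylvesterMatrix_mulVec_vecM (A D X : Matrix (Fin n) (Fin n) ℝ) :
    tSylvesterMatrix A D *ᵥ vecM X = vecM (D * X + Xᵀ * A) := by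
  rw [tSylvesterMatrix, add_mulVec, ← mulVec_mulVec, vecPerm_mulVec_vecM,
    one_kronecker_mulVec_vecM, kronecker_one_mulVec_vecM, transpose_transpose]
  rfl

theorem le_of_tSylvester_le {A D X Y : Matrix (Fin n) (Fin n) ℝ}
    (hM : IsNonsingMMatrix (tSylvesterMatrix A D))
    (h : ∀ i j, (D * X + Xᵀ * A) i j ≤ (D * Y + Yᵀ * A) i j) : ∀ i j, X i j ≤ Y i j := by
  have hvec : 0 ≤ vecM Y - vecM X := hM.nonneg_of_mulVec_nonneg <| by
    rw [mulVec_sub, tSylvesterMatrix_mulVec_vecM, tSylvesterMatrix_mulVec_vecM]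
    exact fun p => sub_nonneg.2 (h p.2 p.1)
  exact fun i j => sub_nonneg.1 (hvec (j, i))

end Vectorization

theorem transpose_mul_mul_self_apply_le {m n α : Type*} [Fintype m] [Semiring α]
    [PartialOrder α] [IsOrderedRing α] {B : Matrix m m α} {Y Z : Matrix m n α}
    (hB : ∀ i j, 0 ≤ B i j) (hY : ∀ i j, 0 ≤ Y i j) (hYZ : ∀ i j, Y i j ≤ Z i j) (i j : n) :
    (Yᵀ * B * Y) i j ≤ (Zᵀ * B * Z) i j := by
  simp only [mul_apply, transpose_apply]
  refine Finset.sum_le_sum fun q _ => mul_le_mul ?_ (hYZ q j) (hY q j) ?_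
  · exact Finset.sum_le_sum fun p _ => mul_le_mul_of_nonneg_right (hYZ p i) (hB p q)
  · exact Finset.sum_nonneg fun p _ => mul_nonneg ((hY p i).trans (hYZ p i)) (hB p q)

/-- Under Assumption 1 (`B ≥ 0`, `C ≤ 0` entrywise, and `I ⊗ D + (Aᵀ ⊗ I) Π` a
nonsingular M-matrix), the fixed-point iterates `X 0 = 0`,
`D * X (k+1) + (X (k+1))ᵀ * A = (X k)ᵀ * B * X k - C` are entrywise nondecreasing;
in particular every iterate is entrywise nonnegative. -/
theorem fixedPoint_iterates_monotone_nonneg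
    {n : ℕ} (A B C D : Matrix (Fin n) (Fin n) ℝ)
    (hB : ∀ i j, 0 ≤ B i j) (hC : ∀ i j, C i j ≤ 0)
    (hM : IsNonsingMMatrix
      ((1 : Matrix (Fin n) (Fin n) ℝ) ⊗ₖ D
        + (Aᵀ ⊗ₖ (1 : Matrix (Fin n) (Fin n) ℝ)) * vecPerm n))
    (X : ℕ → Matrix (Fin n) (Fin n) ℝ) (hX0 : X 0 = 0)
    (hrec : ∀ k, D * X (k + 1) + (X (k + 1))ᵀ * A = (X k)ᵀ * B * X k - C) :
    (∀ k, ∀ i j, X k i j ≤ X (k + 1) i j) ∧ (∀ k, ∀ i j, 0 ≤ X k i j) := by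
  have hstep : ∀ k, (∀ i j, 0 ≤ X k i j) ∧ ∀ i j, X k i j ≤ X (k + 1) i j := by
    intro k
    induction k with
    | zero =>
      refine ⟨by simp [hX0], le_of_tSylvester_le hM fun i j => ?_⟩
      rw [hrec 0, hX0]
      simpa using hC i j
    | succ k ih =>
      obtain ⟨hnonneg, hle⟩ := ih
      refine ⟨fun i j => (hnonneg i j).trans (hle i j), le_of_tSylvester_le hM fun i j => ?_⟩
      rw [hrec, hrec, Matrix.sub_apply, Matrix.sub_apply]
      exact sub_le_sub_right (transpose_mul_mul_self_apply_le hB hnonneg hle i j) _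
  exact ⟨fun k => (hstep k).2, fun k => (hstep k).1⟩
end

section
/- Under Assumption 1, if there exists a nonnegative matrix Y with R_T(Y) ≥ 0 entrywise, then the fixed-point iterates X_0 = 0, S_T(X_{k+1}) = X_kᵀ B X_k − C satisfy X_k ≤ Y entrywise for all k ≥ 0. -/
/-!
Since `vec (S_T X) = M vec X` with `M` a nonsingular M-matrix, `S_T` is inverse-monotone:
write `M = s (1 - P)` with `P ≥ 0`; Gelfand's formula gives `Pᵗ → 0`, and if `M v ≥ 0` then
`v = Pᵗ v + (∑_{i<t} Pⁱ)(1 - P) v ≥ Pᵗ v → 0`. So `S_T X ≤ S_T Y` implies `X ≤ Y`.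
By induction `0 ≤ X_k ≤ Y`: the quadratic term is monotone on nonnegative matrices, so
`S_T X_{k+1} = X_kᵀ B X_k - C` lies between `0 = S_T 0` and `Yᵀ B Y - C ≤ S_T Y`.
-/

open Matrix

open Kronecker

open Filter Topology

theorem tendsto_pow_atTop_nhds_zero_of_spectralRadius_lt_one {A : Type*} [NormedRing A]
    [NormedAlgebra ℂ A] [CompleteSpace A] {a : A} (ha : spectralRadius ℂ a < 1) :
    Tendsto (a ^ ·) atTop (𝓝 0) := by
  obtain ⟨r, hρr, hr1⟩ := ENNReal.lt_iff_exists_nnreal_btwn.mp ha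
  have hgelfand := spectrum.pow_nnnorm_pow_one_div_tendsto_nhds_spectralRadius a
  have hbound : ∀ᶠ k : ℕ in atTop, ‖a ^ k‖ ≤ (r : ℝ) ^ k := by
    filter_upwards [hgelfand.eventually_lt_const hρr, eventually_gt_atTop 0] with k hk hk0
    rw [one_div, ENNReal.rpow_inv_lt_iff (by positivity), ENNReal.rpow_natCast] at hk
    exact_mod_cast hk.le
  exact squeeze_zero_norm' hbound
    (tendsto_pow_atTop_nhds_zero_of_lt_one r.2 (by exact_mod_cast hr1))

namespace Matrix

section Order

variable {l m n α : Type*} [Fintype m] [Semiring α] [PartialOrder α] [IsOrderedRing α]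

theorem mul_apply_nonneg {P : Matrix l m α} {Q : Matrix m n α} (hP : ∀ i j, 0 ≤ P i j)
    (hQ : ∀ i j, 0 ≤ Q i j) (i : l) (j : n) : 0 ≤ (P * Q) i j :=
  Finset.sum_nonneg fun k _ => mul_nonneg (hP i k) (hQ k j)

theorem mul_apply_le_mul_apply {P P' : Matrix l m α} {Q Q' : Matrix m n α}
    (hP : ∀ i j, 0 ≤ P i j) (hPP' : ∀ i j, P i j ≤ P' i j) (hQ : ∀ i j, 0 ≤ Q i j)
    (hQQ' : ∀ i j, Q i j ≤ Q' i j) (i : l) (j : n) : (P * Q) i j ≤ (P' * Q') i j :=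
  Finset.sum_le_sum fun k _ =>
    mul_le_mul (hPP' i k) (hQQ' k j) (hQ k j) ((hP i k).trans (hPP' i k))

theorem transpose_mul_mul_apply_nonneg {B : Matrix m m α} {X : Matrix m n α}
    (hB : ∀ i j, 0 ≤ B i j) (hX : ∀ i j, 0 ≤ X i j) (i j : n) : 0 ≤ (Xᵀ * B * X) i j :=
  mul_apply_nonneg (mul_apply_nonneg (fun i j => hX j i) hB) hX i j

theorem transpose_mul_mul_apply_le {B : Matrix m m α} {X Y : Matrix m n α}
    (hB : ∀ i j, 0 ≤ B i j) (hX : ∀ i j, 0 ≤ X i j) (hXY : ∀ i j, X i j ≤ Y i j) (i j : n) :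
    (Xᵀ * B * X) i j ≤ (Yᵀ * B * Y) i j :=
  mul_apply_le_mul_apply (mul_apply_nonneg (fun i j => hX j i) hB)
    (mul_apply_le_mul_apply (fun i j => hX j i) (fun i j => hXY j i) hB fun _ _ => le_rfl)
    hX hXY i j

theorem mulVec_nonneg {A : Matrix l m α} (hA : ∀ i j, 0 ≤ A i j) {v : m → α} (hv : 0 ≤ v) :
    0 ≤ A *ᵥ v := fun i => Finset.sum_nonneg fun j _ => mul_nonneg (hA i j) (hv j)

end Order

variable {m : Type*} [Fintype m] [DecidableEq m]

theorem tendsto_pow_atTop_nhds_zero_of_spectrum_norm_lt_one {P : Matrix m m ℝ}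
    (hP : ∀ μ ∈ spectrum ℂ (P.map (algebraMap ℝ ℂ)), ‖μ‖ < 1) :
    Tendsto (P ^ ·) atTop (𝓝 0) := by
  cases isEmpty_or_nonempty m
  · exact tendsto_const_nhds.congr fun _ => Subsingleton.elim _ _
  -- Gelfand's formula needs a Banach-algebra norm; the `L∞` operator norm induces the
  -- product topology on matrices.
  let _ := Matrix.linftyOpNormedRing (n := m) (α := ℂ)
  let _ := Matrix.linftyOpNormedAlgebra (n := m) (α := ℂ) (R := ℂ)
  have : CompleteSpace (Matrix m m ℂ) := FiniteDimensional.complete ℂ _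
  have hρ : spectralRadius ℂ (P.map (algebraMap ℝ ℂ)) < 1 := by
    simpa using spectrum.spectralRadius_lt_of_forall_lt _ (r := 1) fun z hz => by
      simpa [← NNReal.coe_lt_coe] using hP z hz
  have hre := ((continuous_id.matrix_map Complex.continuous_re).tendsto 0).comp
    (tendsto_pow_atTop_nhds_zero_of_spectralRadius_lt_one hρ)
  have hback (k : ℕ) : ((P.map (algebraMap ℝ ℂ)) ^ k).map Complex.re = P ^ k := by
    rw [← Matrix.map_pow, Matrix.map_map]
    ext i j
    simp
  simpa only [Function.comp_def, id, hback, Matrix.map_zero, Complex.zero_re] using hre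

theorem norm_lt_one_of_mem_spectrum_map_inv_smul {N : Matrix m m ℝ} {s : ℝ} (hs : 0 < s)
    (hN : ∀ μ ∈ spectrum ℂ (N.map (algebraMap ℝ ℂ)), ‖μ‖ < s) :
    ∀ μ ∈ spectrum ℂ ((s⁻¹ • N).map (algebraMap ℝ ℂ)), ‖μ‖ < 1 := by
  have hmap : (s⁻¹ • N).map (algebraMap ℝ ℂ) =
      Units.mk0 (s⁻¹ : ℂ) (by simpa using hs.ne') • N.map (algebraMap ℝ ℂ) := by
    ext i j
    simp
  rintro _ hμ
  rw [hmap, spectrum.unit_smul_eq_smul] at hμ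
  obtain ⟨μ, hμN, rfl⟩ := hμ
  simp only [Units.val_mk0, smul_eq_mul, norm_mul, norm_inv, Complex.norm_real,
    Real.norm_of_nonneg hs.le]
  rw [inv_mul_lt_one₀ hs]
  exact hN μ hμN

end Matrix

theorem IsNonsingMMatrix.nonneg_of_mulVec_nonneg_s7 {m : Type*} [Fintype m] [DecidableEq m]
    {M : Matrix m m ℝ} (hM : IsNonsingMMatrix M) {v : m → ℝ} (hMv : 0 ≤ M *ᵥ v) : 0 ≤ v := by
  obtain ⟨s, N, hs, hN, rfl, hspec⟩ := hM
  set P := s⁻¹ • N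
  have hP : ∀ i j, 0 ≤ P i j := fun i j => mul_nonneg (inv_nonneg.mpr hs.le) (hN i j)
  have hw : 0 ≤ (1 - P) *ᵥ v := by
    have : (1 - P) *ᵥ v = s⁻¹ • ((s • 1 - N) *ᵥ v) := by
      rw [← smul_mulVec, smul_sub, smul_smul, inv_mul_cancel₀ hs.ne', one_smul]
    rw [this]
    exact smul_nonneg (inv_nonneg.mpr hs.le) hMv
  have hle (t : ℕ) : P ^ t *ᵥ v ≤ v := by
    have : v - P ^ t *ᵥ v = (∑ i ∈ Finset.range t, P ^ i) *ᵥ ((1 - P) *ᵥ v) := by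
      rw [mulVec_mulVec, geom_sum_mul_neg, sub_mulVec, one_mulVec]
    rw [← sub_nonneg, this]
    refine mulVec_nonneg (fun i j => ?_) hw
    rw [Matrix.sum_apply]
    exact Finset.sum_nonneg fun k _ => pow_apply_nonneg hP k i j
  have htend : Tendsto (fun t => P ^ t *ᵥ v) atTop (𝓝 0) := by
    have hPt := tendsto_pow_atTop_nhds_zero_of_spectrum_norm_lt_one
      (norm_lt_one_of_mem_spectrum_map_inv_smul hs hspec)
    simpa [Function.comp_def] using
      ((continuous_id.matrix_mulVec continuous_const).tendsto 0).comp hPt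
  exact le_of_tendsto' htend hle

theorem vecPerm_mulVec_vec {n : ℕ} (X : Matrix (Fin n) (Fin n) ℝ) :
    vecPerm n *ᵥ X.vec = Xᵀ.vec := by
  ext ⟨a, b⟩
  simp [vecPerm, mulVec, dotProduct, Matrix.sum_apply, single, Fintype.sum_prod_type, ite_and]

def sylvesterT {m α : Type*} [Fintype m] [NonUnitalNonAssocSemiring α]
    (A D X : Matrix m m α) : Matrix m m α :=
  D * X + Xᵀ * A

@[simp]
theorem sylvesterT_zero {m α : Type*} [Fintype m] [NonUnitalNonAssocSemiring α]
    (A D : Matrix m m α) : sylvesterT A D 0 = 0 := by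
  simp [sylvesterT]

theorem sylvesterT_sub {m α : Type*} [Fintype m] [NonUnitalNonAssocRing α]
    (A D X Y : Matrix m m α) : sylvesterT A D (Y - X) = sylvesterT A D Y - sylvesterT A D X := by
  simp only [sylvesterT, transpose_sub, Matrix.mul_sub, Matrix.sub_mul]
  abel

theorem mulVec_vec_eq_vec_sylvesterT {n : ℕ} (A D X : Matrix (Fin n) (Fin n) ℝ) :
    (1 ⊗ₖ D + (Aᵀ ⊗ₖ 1) * vecPerm n) *ᵥ X.vec = (sylvesterT A D X).vec := by
  rw [add_mulVec, ← mulVec_mulVec, vecPerm_mulVec_vec, kronecker_mulVec_vec, kronecker_mulVec_vec]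
  simp [sylvesterT]

theorem le_of_sylvesterT_le {n : ℕ} {A D : Matrix (Fin n) (Fin n) ℝ}
    (hM : IsNonsingMMatrix (1 ⊗ₖ D + (Aᵀ ⊗ₖ 1) * vecPerm n)) {X Y : Matrix (Fin n) (Fin n) ℝ}
    (h : ∀ i j, sylvesterT A D X i j ≤ sylvesterT A D Y i j) : ∀ i j, X i j ≤ Y i j := by
  have hvec : 0 ≤ (Y - X).vec := by
    refine hM.nonneg_of_mulVec_nonneg_s7 ?_
    rw [mulVec_vec_eq_vec_sylvesterT, sylvesterT_sub]
    exact fun p => sub_nonneg.mpr (h p.2 p.1)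
  exact fun i j => sub_nonneg.mp (hvec (j, i))

/-- Under Assumption 1, if there exists a nonnegative matrix `Y` with `R_T(Y) ≥ 0`
entrywise, then the fixed-point iterates `X 0 = 0`,
`D * X (k+1) + (X (k+1))ᵀ * A = (X k)ᵀ * B * X k - C` satisfy `X k ≤ Y` entrywise. -/
theorem fixedPoint_iterates_le_supersolution
    {n : ℕ} (A B C D : Matrix (Fin n) (Fin n) ℝ)
    (hB : ∀ i j, 0 ≤ B i j) (hC : ∀ i j, C i j ≤ 0)
    (hM : IsNonsingMMatrix
      ((1 : Matrix (Fin n) (Fin n) ℝ) ⊗ₖ D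
        + (Aᵀ ⊗ₖ (1 : Matrix (Fin n) (Fin n) ℝ)) * vecPerm n))
    (Y : Matrix (Fin n) (Fin n) ℝ) (hY : ∀ i j, 0 ≤ Y i j)
    (hRY : ∀ i j, 0 ≤ (D * Y + Yᵀ * A - Yᵀ * B * Y + C) i j)
    (X : ℕ → Matrix (Fin n) (Fin n) ℝ) (hX0 : X 0 = 0)
    (hrec : ∀ k, D * X (k + 1) + (X (k + 1))ᵀ * A = (X k)ᵀ * B * X k - C) :
    ∀ k, ∀ i j, X k i j ≤ Y i j := by
  suffices h : ∀ k, (∀ i j, 0 ≤ X k i j) ∧ ∀ i j, X k i j ≤ Y i j from fun k => (h k).2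
  intro k
  induction k with
  | zero => simpa [hX0] using hY
  | succ k ih =>
    obtain ⟨hX, hXY⟩ := ih
    have hS : sylvesterT A D (X (k + 1)) = (X k)ᵀ * B * X k - C := hrec k
    refine ⟨le_of_sylvesterT_le hM (X := 0) fun i j => ?_,
      le_of_sylvesterT_le hM fun i j => ?_⟩
    · rw [sylvesterT_zero, hS, Matrix.zero_apply, Matrix.sub_apply]
      linarith [transpose_mul_mul_apply_nonneg hB hX i j, hC i j]
    · have hRYij := hRY i j
      rw [hS, sylvesterT]
      simp only [Matrix.add_apply, Matrix.sub_apply] at hRYij ⊢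
      linarith [transpose_mul_mul_apply_le hB hX hXY i j]
end

section
/- Let X_k, X_{k+1}, X_{k-1} ∈ ℝ^{n×n} satisfy the Newton recurrences (D − X_{k-1}ᵀB)X_k + X_kᵀ(A − BX_{k-1}) = −X_{k-1}ᵀBX_{k-1} − C and (D − X_kᵀB)X_{k+1} + X_{k+1}ᵀ(A − BX_k) = −X_kᵀBX_k − C. Then (D − X_kᵀB)(X_{k+1} − X_k) + (X_{k+1} − X_k)ᵀ(A − BX_k) = (X_k − X_{k-1})ᵀ B (X_k − X_{k-1}). -/
open Matrix

/-- Key algebraic identity for monotonicity of the Newton–Kleinman iteration: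
if consecutive Newton steps hold, then
`(D − Xkᵀ B)(X_{k+1} − Xk) + (X_{k+1} − Xk)ᵀ (A − B Xk)
  = (Xk − X_{k−1})ᵀ B (Xk − X_{k−1})`. -/
theorem newton_consecutive_identity
    {n : ℕ} (A B C D Xkm1 Xk Xkp1 : Matrix (Fin n) (Fin n) ℝ)
    (h1 : (D - Xkm1ᵀ * B) * Xk + Xkᵀ * (A - B * Xkm1) = -(Xkm1ᵀ * B * Xkm1) - C)
    (h2 : (D - Xkᵀ * B) * Xkp1 + Xkp1ᵀ * (A - B * Xk) = -(Xkᵀ * B * Xk) - C) :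
    (D - Xkᵀ * B) * (Xkp1 - Xk) + (Xkp1 - Xk)ᵀ * (A - B * Xk) =
      (Xk - Xkm1)ᵀ * B * (Xk - Xkm1) := by
  simp only [transpose_sub]
  linear_combination (norm := noncomm_ring) h2 - h1
end

section
/- Let X_min solve R_T(X_min) = 0 and let X_{k+1} satisfy the Newton step (D − X_kᵀB)X_{k+1} + X_{k+1}ᵀ(A − BX_k) = −X_kᵀBX_k − C. Then (D − X_kᵀB)(X_min − X_{k+1}) + (X_min − X_{k+1})ᵀ(A − BX_k) = (X_min − X_k)ᵀ B (X_min − X_k). -/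
open Matrix

/-- If `R_T(Xmin) = 0` and `X_{k+1}` satisfies the Newton step
`(D − Xkᵀ B) X_{k+1} + X_{k+1}ᵀ (A − B Xk) = −Xkᵀ B Xk − C`, then
`(D − Xkᵀ B)(Xmin − X_{k+1}) + (Xmin − X_{k+1})ᵀ (A − B Xk)
  = (Xmin − Xk)ᵀ B (Xmin − Xk)`. -/
theorem newton_below_minimal_identity
    {n : ℕ} (A B C D Xk Xkp1 Xmin : Matrix (Fin n) (Fin n) ℝ)
    (hsol : D * Xmin + Xminᵀ * A - Xminᵀ * B * Xmin + C = 0)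
    (hstep : (D - Xkᵀ * B) * Xkp1 + Xkp1ᵀ * (A - B * Xk) = -(Xkᵀ * B * Xk) - C) :
    (D - Xkᵀ * B) * (Xmin - Xkp1) + (Xmin - Xkp1)ᵀ * (A - B * Xk) =
      (Xmin - Xk)ᵀ * B * (Xmin - Xk) := by
  have h1 : (D - Xkᵀ * B) * Xmin + Xminᵀ * (A - B * Xk)
      = (Xmin - Xk)ᵀ * B * (Xmin - Xk) + (-(Xkᵀ * B * Xk) - C) := by
    have := hsol
    simp only [Matrix.transpose_sub, Matrix.transpose_mul, Matrix.transpose_transpose]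
    linear_combination (norm := noncomm_ring) this
  calc (D - Xkᵀ * B) * (Xmin - Xkp1) + (Xmin - Xkp1)ᵀ * (A - B * Xk)
      = ((D - Xkᵀ * B) * Xmin + Xminᵀ * (A - B * Xk))
        - ((D - Xkᵀ * B) * Xkp1 + Xkp1ᵀ * (A - B * Xk)) := by
        simp only [Matrix.transpose_sub]
        noncomm_ring
    _ = (Xmin - Xk)ᵀ * B * (Xmin - Xk) := by rw [h1, hstep]; abel
end

section
/- Let S_k, L_{k+1} ∈ ℝ^{n×n} satisfy the inexact Newton relation R_T'[X_k](S_k) + R_T(X_k) = L_{k+1}, where R_T'[X](Y) = (D − XᵀB)Y + Yᵀ(A − BX). Then for every real λ, R_T(X_k + λ S_k) = (1 − λ) R_T(X_k) + λ L_{k+1} − λ² S_kᵀ B S_k. -/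
open Matrix

/-- If `S_k` satisfies the inexact Newton relation
`R_T'[X_k](S_k) + R_T(X_k) = L_{k+1}`, where
`R_T'[X](Y) = (D − Xᵀ B) Y + Yᵀ (A − B X)` and
`R_T(X) = D X + Xᵀ A − Xᵀ B X + C`, then for every real `λ`,
`R_T(X_k + λ S_k) = (1 − λ) R_T(X_k) + λ L_{k+1} − λ² S_kᵀ B S_k`. -/
theorem inexact_newton_residual_identity
    {n : ℕ} (A B C D Xk Sk L : Matrix (Fin n) (Fin n) ℝ)
    (h : (D - Xkᵀ * B) * Sk + Skᵀ * (A - B * Xk)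
        + (D * Xk + Xkᵀ * A - Xkᵀ * B * Xk + C) = L) :
    ∀ lam : ℝ,
      D * (Xk + lam • Sk) + (Xk + lam • Sk)ᵀ * A
          - (Xk + lam • Sk)ᵀ * B * (Xk + lam • Sk) + C =
        (1 - lam) • (D * Xk + Xkᵀ * A - Xkᵀ * B * Xk + C) + lam • L
          - (lam ^ 2) • (Skᵀ * B * Sk) := by
  intro lam
  subst h
  simp only [transpose_add, transpose_smul, add_mul, mul_add, sub_mul, mul_sub,
    smul_add, smul_sub, smul_smul, sub_smul, add_smul, one_smul,
    Matrix.smul_mul, Matrix.mul_smul, pow_two, mul_assoc]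
  abel
end

section
/- With R_T(X_k+λS_k) = (1−λ)R_T(X_k) + λL_{k+1} − λ²S_kᵀBS_k, ‖L_{k+1}‖_F ≤ η̄‖R_T(X_k)‖_F for η̄ ∈ (0,1), and α ∈ (0, 1−η̄), the decrease condition ‖R_T(X_k + λS_k)‖_F ≤ (1 − αλ)‖R_T(X_k)‖_F holds for all λ ∈ (0, (1−α−η̄)‖R_T(X_k)‖_F / ‖S_kᵀBS_k‖_F] with λ ≤ 1. -/
open Matrix

attribute [local instance] Matrix.frobeniusNormedAddCommGroup Matrix.frobeniusNormedSpace

/-- With the residual expansion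
`R_T(X_k + λ S_k) = (1 − λ) R_T(X_k) + λ L_{k+1} − λ² S_kᵀ B S_k`,
`‖L_{k+1}‖_F ≤ η̄ ‖R_T(X_k)‖_F` for `η̄ ∈ (0,1)` and `α ∈ (0, 1 − η̄)`, the sufficient
decrease condition `‖R_T(X_k + λ S_k)‖_F ≤ (1 − α λ) ‖R_T(X_k)‖_F` holds for all
`λ ∈ (0, (1 − α − η̄) ‖R_T(X_k)‖_F / ‖S_kᵀ B S_k‖_F]` with `λ ≤ 1`. -/
theorem sufficient_decrease_interval
    {n : ℕ} (A B C D Xk Sk L : Matrix (Fin n) (Fin n) ℝ)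
    (RT : Matrix (Fin n) (Fin n) ℝ → Matrix (Fin n) (Fin n) ℝ)
    (hRT : RT = fun X => D * X + Xᵀ * A - Xᵀ * B * X + C)
    (hexp : ∀ lam : ℝ, RT (Xk + lam • Sk) =
      (1 - lam) • RT Xk + lam • L - (lam ^ 2) • (Skᵀ * B * Sk))
    (etabar alpha : ℝ) (heta0 : 0 < etabar) (heta1 : etabar < 1)
    (halpha0 : 0 < alpha) (halpha1 : alpha < 1 - etabar)
    (hL : ‖L‖ ≤ etabar * ‖RT Xk‖)
    (hS : Skᵀ * B * Sk ≠ 0) :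
    ∀ lam : ℝ, 0 < lam → lam ≤ 1 →
      lam ≤ (1 - alpha - etabar) * ‖RT Xk‖ / ‖Skᵀ * B * Sk‖ →
      ‖RT (Xk + lam • Sk)‖ ≤ (1 - alpha * lam) * ‖RT Xk‖ := by
  intro lam hl0 hl1 hbound
  have hQpos : 0 < ‖Skᵀ * B * Sk‖ := norm_pos_iff.mpr hS
  have hQ : lam * ‖Skᵀ * B * Sk‖ ≤ (1 - alpha - etabar) * ‖RT Xk‖ := by
    rw [le_div_iff₀ hQpos] at hbound
    linarith
  have h1 : ‖RT (Xk + lam • Sk)‖ ≤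
      (1 - lam) * ‖RT Xk‖ + lam * ‖L‖ + lam ^ 2 * ‖Skᵀ * B * Sk‖ := by
    rw [hexp lam]
    calc ‖(1 - lam) • RT Xk + lam • L - (lam ^ 2) • (Skᵀ * B * Sk)‖
        ≤ ‖(1 - lam) • RT Xk + lam • L‖ + ‖(lam ^ 2) • (Skᵀ * B * Sk)‖ :=
          norm_sub_le _ _
      _ ≤ ‖(1 - lam) • RT Xk‖ + ‖lam • L‖ + ‖(lam ^ 2) • (Skᵀ * B * Sk)‖ := by
          gcongr; exact norm_add_le _ _
      _ = (1 - lam) * ‖RT Xk‖ + lam * ‖L‖ + lam ^ 2 * ‖Skᵀ * B * Sk‖ := by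
          rw [norm_smul, norm_smul, norm_smul]
          simp [abs_of_nonneg hl0.le, abs_of_nonneg (by linarith : (0:ℝ) ≤ 1 - lam),
            abs_of_nonneg (sq_nonneg lam)]
  have h2 : lam ^ 2 * ‖Skᵀ * B * Sk‖ ≤ lam * ((1 - alpha - etabar) * ‖RT Xk‖) := by
    have : lam ^ 2 * ‖Skᵀ * B * Sk‖ = lam * (lam * ‖Skᵀ * B * Sk‖) := by ring
    rw [this]
    exact mul_le_mul_of_nonneg_left hQ hl0.le
  have h3 : lam * ‖L‖ ≤ lam * (etabar * ‖RT Xk‖) :=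
    mul_le_mul_of_nonneg_left hL hl0.le
  nlinarith [norm_nonneg (RT Xk)]
end
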